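/- Let α ∈ ℝ with 0 ≤ α < 1, let V : ℕ → ℝ be nonnegative, and let t, T : ℕ → ℕ be sequences of episode start and end times satisfying t(i) ≤ T(i) < t(i+1) for all i. Suppose (a) within each episode, V(s+1) - α·V(s) ≤ 0 for every s with t(i) ≤ s < T(i); and (b) across episode boundaries, V(t(i+1)) - α·V(T(i)) ≤ 0 for every i. Then for every i and every s with t(i) ≤ s ≤ T(i), V(s) ≤ α^{c(i) + (s - t(i))} · V(t(0)), where c(i) = Σ_{j<i} (T(j) - t(j) + 1) is the cumulative number of goal-seeking steps before episode i. In particular, the subsequence V(t(i)) tends to 0 as i → ∞. -/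
import Mathlib


open Filter

/-- Main Theorem of the paper (case of infinitely many goal-seeking
episodes), stated abstractly. The controller alternates between
goal-seeking episodes `[t i, T i]`, during which the oCLF condition
`V (s+1) - α * V s ≤ 0` holds, and exploratory phases across which
`V (t (i+1)) - α * V (T i) ≤ 0` (Lemma 2). Then the trace of oCLF values
along cumulative goal-seeking time `c i + (s - t i)` is bounded by a
geometric sequence, and `V (t i) → 0`. -/
theorem hybrid_controller_convergence (α : ℝ) (hα0 : 0 ≤ α) (hα1 : α < 1)
    (V : ℕ → ℝ) (hVnn : ∀ s, 0 ≤ V s)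
    (t T : ℕ → ℕ) (hord : ∀ i, t i ≤ T i ∧ T i < t (i + 1))
    (ha : ∀ i s, t i ≤ s → s < T i → V (s + 1) - α * V s ≤ 0)
    (hb : ∀ i, V (t (i + 1)) - α * V (T i) ≤ 0)
    (c : ℕ → ℕ) (hc : ∀ i, c i = ∑ j ∈ Finset.range i, (T j - t j + 1)) :
    (∀ i s, t i ≤ s → s ≤ T i → V s ≤ α ^ (c i + (s - t i)) * V (t 0)) ∧
      Tendsto (fun i => V (t i)) atTop (nhds 0) := by
  -- within-episode decrease
  have within : ∀ i k, t i + k ≤ T i → V (t i + k) ≤ α ^ k * V (t i) := by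
    intro i k
    induction k with
    | zero => intro _; simp
    | succ k ih =>
      intro hk
      have hk' : t i + k ≤ T i := by omega
      have h1 := ha i (t i + k) (Nat.le_add_right _ _) (by omega)
      calc V (t i + (k + 1)) = V ((t i + k) + 1) := by ring_nf
        _ ≤ α * V (t i + k) := by linarith
        _ ≤ α * (α ^ k * V (t i)) := by
            exact mul_le_mul_of_nonneg_left (ih hk') hα0
        _ = α ^ (k + 1) * V (t i) := by ring
  -- start-of-episode bound
  have start : ∀ i, V (t i) ≤ α ^ (c i) * V (t 0) := by
    intro i
    induction i with
    | zero => simp [hc 0]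
    | succ i ih =>
      have h1 := hb i
      have h2 : V (T i) ≤ α ^ (T i - t i) * V (t i) := by
        have hoi := (hord i).1
        have := within i (T i - t i) (by omega)
        have ht : t i + (T i - t i) = T i := by omega
        rwa [ht] at this
      have hcseq : c (i + 1) = c i + (T i - t i + 1) := by
        rw [hc (i + 1), hc i, Finset.sum_range_succ]
      calc V (t (i + 1)) ≤ α * V (T i) := by linarith
        _ ≤ α * (α ^ (T i - t i) * (α ^ (c i) * V (t 0))) := by
            apply mul_le_mul_of_nonneg_left _ hα0
            calc V (T i) ≤ α ^ (T i - t i) * V (t i) := h2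
              _ ≤ α ^ (T i - t i) * (α ^ (c i) * V (t 0)) :=
                mul_le_mul_of_nonneg_left ih (pow_nonneg hα0 _)
        _ = α ^ (c i + (T i - t i + 1)) * V (t 0) := by ring
        _ = α ^ (c (i + 1)) * V (t 0) := by rw [hcseq]
  have main : ∀ i s, t i ≤ s → s ≤ T i → V s ≤ α ^ (c i + (s - t i)) * V (t 0) := by
    intro i s hs1 hs2
    have h1 := within i (s - t i) (by omega)
    have ht : t i + (s - t i) = s := by omega
    rw [ht] at h1
    calc V s ≤ α ^ (s - t i) * V (t i) := h1
      _ ≤ α ^ (s - t i) * (α ^ (c i) * V (t 0)) :=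
        mul_le_mul_of_nonneg_left (start i) (pow_nonneg hα0 _)
      _ = α ^ (c i + (s - t i)) * V (t 0) := by ring
  refine ⟨main, ?_⟩
  -- c i ≥ i
  have hci : ∀ i, i ≤ c i := by
    intro i
    rw [hc i]
    calc i = ∑ _j ∈ Finset.range i, 1 := by simp
      _ ≤ _ := Finset.sum_le_sum (fun j _ => by omega)
  have hbound : ∀ i, V (t i) ≤ α ^ i * V (t 0) := by
    intro i
    calc V (t i) ≤ α ^ (c i) * V (t 0) := start i
      _ ≤ α ^ i * V (t 0) :=
        mul_le_mul_of_nonneg_right (pow_le_pow_of_le_one hα0 hα1.le (hci i)) (hVnn _)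
  have hgeo : Tendsto (fun i => α ^ i * V (t 0)) atTop (nhds 0) := by
    have := tendsto_pow_atTop_nhds_zero_of_lt_one hα0 hα1
    simpa using this.mul_const (V (t 0))
  exact squeeze_zero (fun i => hVnn _) hbound hgeo
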